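/- arXiv:2010.15873 — 2 statements merged into one kernel-verified Lean document; each statement's English description precedes it below -/
import Mathlib

section
/- Let f ∈ C¹(ℝ) ∩ L^p(ℝ) with f' ∈ L^p(ℝ) and f' Hölder continuous of order 1/p, where 1 ≤ p < ∞. Then ‖f'‖_{L^p(ℝ)}^p = lim_{λ→∞} λ^p 𝓛²({(x,t) ∈ ℝ × (0,∞) : |f(x+t) − f(x)| / t^{1+1/p} > λ}). -/
/-! The Hölder bound on `f'` gives the Taylor estimate
`| |f (x + t) - f x| - |f' x| t | ≤ M t ^ (1 + 1/p)`, so for `λ > M` the slice over `x` of the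
superlevel set is squeezed between the intervals `(0, (|f' x| / (λ + M)) ^ p)` and
`(0, (|f' x| / (λ - M)) ^ p)`. Integrating in `x` sandwiches `λ ^ p 𝓛²(…)` between
`(λ / (λ ± M)) ^ p ‖f'‖ₚᵖ`, and both bounds tend to `‖f'‖ₚᵖ`. -/

open MeasureTheory Filter Set Real Topology
open scoped ENNReal

lemma abs_sub_sub_deriv_mul_le_of_holder {f : ℝ → ℝ} (hf : Differentiable ℝ f) {M α : ℝ}
    (hM : 0 ≤ M) (hα : 0 ≤ α)
    (hHolder : ∀ x y : ℝ, |deriv f x - deriv f y| ≤ M * |x - y| ^ α) {x t : ℝ} (ht : 0 ≤ t) :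
    |f (x + t) - f x - deriv f x * t| ≤ M * t ^ α * t := by
  have hderiv : ∀ y ∈ Icc x (x + t), HasDerivWithinAt (fun y => f y - deriv f x * y)
      (deriv f y - deriv f x) (Icc x (x + t)) y := fun y _ =>
    ((hf y).hasDerivAt.sub ((hasDerivAt_id y).const_mul _)).hasDerivWithinAt.congr_deriv
      (by ring)
  have hbound : ∀ y ∈ Ico x (x + t), ‖deriv f y - deriv f x‖ ≤ M * t ^ α := fun y hy =>
    (hHolder y x).trans <| by gcongr; exact abs_le.2 ⟨by linarith [hy.1], by linarith [hy.2]⟩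
  have hmvt := norm_image_sub_le_of_norm_deriv_le_segment' hderiv hbound (x + t)
    ⟨by linarith, le_rfl⟩
  rw [Real.norm_eq_abs] at hmvt
  convert hmvt using 2 <;> ring

lemma mem_Ioo_zero_div_rpow_iff {p a c t : ℝ} (hp : 0 < p) (ha : 0 ≤ a) (hc : 0 < c) :
    t ∈ Ioo 0 ((a / c) ^ p) ↔ 0 < t ∧ c * t ^ (1 / p) < a := by
  simp only [mem_Ioo]
  refine and_congr_right fun ht => ?_
  rw [← lt_div_iff₀' hc, one_div, rpow_inv_lt_iff_of_pos ht.le (by positivity) hp]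

section Superlevel

variable {p M a l : ℝ} {h : ℝ → ℝ}

lemma Ioo_subset_setOf_rpow_lt_abs (hp : 0 < p) (ha : 0 ≤ a) (hlM : 0 < l + M)
    (hh : ∀ t, 0 < t → |(|h t| - a * t)| ≤ M * t ^ (1 / p) * t) :
    Ioo 0 ((a / (l + M)) ^ p) ⊆ {t | 0 < t ∧ l * t ^ (1 + 1 / p) < |h t|} := by
  intro t ht
  obtain ⟨ht0, hlt⟩ := (mem_Ioo_zero_div_rpow_iff hp ha hlM).1 ht
  refine ⟨ht0, ?_⟩
  have := (abs_le.1 (hh t ht0)).1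
  rw [rpow_add ht0, rpow_one]
  nlinarith [mul_lt_mul_of_pos_right hlt ht0]

lemma setOf_rpow_lt_abs_subset_Ioo (hp : 0 < p) (ha : 0 ≤ a) (hlM : 0 < l - M)
    (hh : ∀ t, 0 < t → |(|h t| - a * t)| ≤ M * t ^ (1 / p) * t) :
    {t | 0 < t ∧ l * t ^ (1 + 1 / p) < |h t|} ⊆ Ioo 0 ((a / (l - M)) ^ p) := by
  rintro t ⟨ht0, hlt⟩
  refine (mem_Ioo_zero_div_rpow_iff hp ha hlM).2 ⟨ht0, lt_of_mul_lt_mul_right ?_ ht0.le⟩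
  have := (abs_le.1 (hh t ht0)).2
  rw [rpow_add ht0, rpow_one] at hlt
  nlinarith

end Superlevel

section ProdRestrictIoi

variable {S : Set (ℝ × ℝ)}

lemma lintegral_ofReal_le_prod_restrict_Ioi (hS : MeasurableSet S) {u : ℝ → ℝ}
    (hu : ∀ x, Ioo 0 (u x) ⊆ Prod.mk x ⁻¹' S) :
    ∫⁻ x, ENNReal.ofReal (u x) ≤ volume.prod (volume.restrict (Ioi 0)) S := by
  rw [Measure.prod_apply hS]
  refine lintegral_mono fun x => ?_
  calc ENNReal.ofReal (u x) = volume.restrict (Ioi 0) (Ioo 0 (u x)) := by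
        rw [Measure.restrict_eq_self _ Ioo_subset_Ioi_self, volume_Ioo, sub_zero]
    _ ≤ _ := measure_mono (hu x)

lemma prod_restrict_Ioi_le_lintegral_ofReal (hS : MeasurableSet S) {v : ℝ → ℝ}
    (hv : ∀ x, Prod.mk x ⁻¹' S ⊆ Ioo 0 (v x)) :
    volume.prod (volume.restrict (Ioi 0)) S ≤ ∫⁻ x, ENNReal.ofReal (v x) := by
  rw [Measure.prod_apply hS]
  refine lintegral_mono fun x => ?_
  calc volume.restrict (Ioi 0) (Prod.mk x ⁻¹' S) ≤ volume (Ioo 0 (v x)) :=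
        (measure_mono (hv x)).trans (Measure.restrict_apply_le _ _)
    _ = ENNReal.ofReal (v x) := by rw [volume_Ioo, sub_zero]

end ProdRestrictIoi

lemma ofReal_rpow_mul_lintegral_div_rpow {α : Type*} [MeasurableSpace α] (μ : Measure α)
    (g : α → ℝ) {p l c : ℝ} (hl : 0 ≤ l) (hc : 0 ≤ c) :
    ENNReal.ofReal (l ^ p) * ∫⁻ x, ENNReal.ofReal ((|g x| / c) ^ p) ∂μ =
      ENNReal.ofReal ((l / c) ^ p) * ∫⁻ x, ENNReal.ofReal (|g x| ^ p) ∂μ := by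
  rw [← lintegral_const_mul' _ _ ENNReal.ofReal_ne_top,
    ← lintegral_const_mul' _ _ ENNReal.ofReal_ne_top]
  refine lintegral_congr fun x => ?_
  rw [← ENNReal.ofReal_mul (by positivity), ← ENNReal.ofReal_mul (by positivity),
    div_rpow (abs_nonneg _) hc, div_rpow hl hc]
  ring_nf

lemma tendsto_div_add_const_atTop_nhds_one (c : ℝ) :
    Tendsto (fun l : ℝ => l / (l + c)) atTop (𝓝 1) := by
  have : Tendsto (fun l : ℝ => 1 - c / (l + c)) atTop (𝓝 (1 - 0)) :=
    tendsto_const_nhds.sub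
      (tendsto_const_nhds.div_atTop (tendsto_atTop_add_const_right _ c tendsto_id))
  rw [sub_zero] at this
  refine this.congr' ?_
  filter_upwards [eventually_ne_atTop (-c)] with l hl
  have : l + c ≠ 0 := fun h => hl (by linarith)
  field_simp
  ring

lemma tendsto_ofReal_div_add_const_rpow_mul (p c : ℝ) (I : ℝ≥0∞) :
    Tendsto (fun l : ℝ => ENNReal.ofReal ((l / (l + c)) ^ p) * I) atTop (𝓝 I) := by
  have := ENNReal.Tendsto.mul_const (ENNReal.tendsto_ofReal
    ((tendsto_div_add_const_atTop_nhds_one c).rpow_const (Or.inl one_ne_zero) (p := p)))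
    (Or.inl (by simp)) (b := I)
  simpa using this

theorem bsy_limit_formula_one_dim_general
    (p : ℝ) (hp : 1 ≤ p)
    (f : ℝ → ℝ) (hf : ContDiff ℝ 1 f)
    (M : ℝ) (hHolder : ∀ x y : ℝ, |deriv f x - deriv f y| ≤ M * |x - y| ^ (1 / p)) :
    Tendsto (fun l : ℝ => ENNReal.ofReal (l ^ p) *
        (volume.prod (volume.restrict (Set.Ioi (0 : ℝ))))
          {q : ℝ × ℝ | 0 < q.2 ∧ l * q.2 ^ (1 + 1 / p) < |f (q.1 + q.2) - f q.1|})
      atTop (nhds (∫⁻ x, ENNReal.ofReal (|deriv f x| ^ p))) := by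
  have hp0 : 0 < p := by linarith
  have hM : 0 ≤ M := by simpa using (abs_nonneg _).trans (hHolder 1 0)
  have hfm : Measurable f := hf.continuous.measurable
  have hE : ∀ l : ℝ, MeasurableSet
      {q : ℝ × ℝ | 0 < q.2 ∧ l * q.2 ^ (1 + 1 / p) < |f (q.1 + q.2) - f q.1|} := fun l =>
    (measurableSet_Ioi.preimage measurable_snd).inter <|
      measurableSet_lt (f := fun q : ℝ × ℝ => l * q.2 ^ (1 + 1 / p)) (by fun_prop) (by fun_prop)
  have hslice : ∀ x t, 0 < t → |(|f (x + t) - f x| - |deriv f x| * t)| ≤ M * t ^ (1 / p) * t :=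
    fun x t ht => by
      calc _ = |(|f (x + t) - f x| - |deriv f x * t|)| := by rw [abs_mul, abs_of_pos ht]
        _ ≤ |f (x + t) - f x - deriv f x * t| := abs_abs_sub_abs_le_abs_sub _ _
        _ ≤ _ := abs_sub_sub_deriv_mul_le_of_holder (hf.differentiable one_ne_zero) hM
          (by positivity) hHolder ht.le
  refine tendsto_of_tendsto_of_tendsto_of_le_of_le' (tendsto_ofReal_div_add_const_rpow_mul p M _)
    (by simpa [← sub_eq_add_neg] using tendsto_ofReal_div_add_const_rpow_mul p (-M) _) ?_ ?_ <;>
    filter_upwards [eventually_gt_atTop M] with l hl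
  · rw [← ofReal_rpow_mul_lintegral_div_rpow _ _ (by linarith) (by linarith)]
    gcongr
    exact lintegral_ofReal_le_prod_restrict_Ioi (hE l) fun x =>
      Ioo_subset_setOf_rpow_lt_abs hp0 (abs_nonneg _) (by linarith) (hslice x)
  · rw [← ofReal_rpow_mul_lintegral_div_rpow _ _ (by linarith) (by linarith)]
    gcongr
    exact prod_restrict_Ioi_le_lintegral_ofReal (hE l) fun x =>
      setOf_rpow_lt_abs_subset_Ioo hp0 (abs_nonneg _) (by linarith) (hslice x)

/-- The one-dimensional Brezis–Van Schaftingen–Yung limit formula: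
`‖f'‖_p^p = lim_{λ→∞} λ^p 𝓛²({(x,t) ∈ ℝ × (0,∞) : |f(x+t) − f(x)| / t^(1+1/p) > λ})`
for `f ∈ C¹(ℝ) ∩ L^p(ℝ)` with `f' ∈ L^p` Hölder continuous of order `1/p`. -/
theorem bsy_limit_formula_one_dim
    (p : ℝ) (hp : 1 ≤ p)
    (f : ℝ → ℝ) (hf : ContDiff ℝ 1 f)
    (hfp : MemLp f (ENNReal.ofReal p) volume)
    (hf'p : MemLp (deriv f) (ENNReal.ofReal p) volume)
    (M : ℝ) (hHolder : ∀ x y : ℝ, |deriv f x - deriv f y| ≤ M * |x - y| ^ (1 / p)) :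
    Tendsto (fun l : ℝ => ENNReal.ofReal (l ^ p) *
        (volume.prod (volume.restrict (Set.Ioi (0 : ℝ))))
          {q : ℝ × ℝ | 0 < q.2 ∧ l * q.2 ^ (1 + 1 / p) < |f (q.1 + q.2) - f q.1|})
      atTop (nhds (∫⁻ x, ENNReal.ofReal (|deriv f x| ^ p))) :=
  bsy_limit_formula_one_dim_general p hp f hf M hHolder
end

section
/- Let (X, m) be a σ-finite measure space, {T_t : t > 0} a family of operators, 1 ≤ p < ∞, γ ≠ 0, and set L = ∞ if γ > 0 and L = 0 if γ < 0. Suppose g(x) = lim_{t→0+} T_t f(x) exists and is finite m-a.e., and T*f = sup_{t>0}|T_t f| ∈ L^p(X,m). Then lim_{λ→L} λ^p ∬_{{(x,t) : t^{−γ/p}|T_t f(x)| > λ}} t^{γ−1} dt dm(x) = (1/|γ|) ‖g‖_{L^p(X,m)}^p. -/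
/-!
Write `w = t^(γ-1) dt`. With `c = λ^(-p/γ)`, the substitution `t = c s` and the homogeneity of `w`
turn `λ^p (m × w){t^(-γ/p) |T_t f| > λ}` into `∫ w{s > 0 : s^(γ/p) < |T_{cs} f(x)|} dm(x)`, and
`c → 0⁺` in both regimes `λ → ∞` (`γ > 0`) and `λ → 0⁺` (`γ < 0`). Off the null level set
`s^(γ/p) = |g x|` the slices converge to `{s > 0 : s^(γ/p) < |g x|}`, of measure `|g x|^p / |γ|`,
and dominated convergence applies twice, the slices all lying in `{s > 0 : s^(γ/p) < T* f(x)}`, of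
measure `(T* f(x))^p / |γ|`.
-/

open MeasureTheory Filter Set
open scoped ENNReal

noncomputable section

/-- The measure on `(0,∞)` with density `t^(γ-1)`. -/
def wGamma (γ : ℝ) : Measure ℝ :=
  (volume.restrict (Set.Ioi (0 : ℝ))).withDensity fun t => ENNReal.ofReal (t ^ (γ - 1))

/-- The maximal function `T* f (x) = sup_{t>0} |T_t f (x)|`. -/
def TstarFn {X : Type*} (T : ℝ → X → ℝ) (x : X) : ℝ≥0∞ :=
  ⨆ (t : ℝ) (_ : 0 < t), ENNReal.ofReal |T t x|

open Topology

instance (γ : ℝ) : SFinite (wGamma γ) := by unfold wGamma; infer_instance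

instance (γ : ℝ) : NullSingletonClass (wGamma γ) := by unfold wGamma; infer_instance

lemma wGamma_apply {γ : ℝ} {S : Set ℝ} (hS : MeasurableSet S) :
    wGamma γ S = ∫⁻ t in S ∩ Ioi 0, ENNReal.ofReal (t ^ (γ - 1)) := by
  rw [wGamma, withDensity_apply _ hS, Measure.restrict_restrict hS]

lemma wGamma_Ioo {γ : ℝ} (hγ : 0 < γ) {B : ℝ} (hB : 0 ≤ B) :
    wGamma γ (Ioo 0 B) = ENNReal.ofReal (B ^ γ / γ) := by
  rw [wGamma_apply measurableSet_Ioo, inter_eq_self_of_subset_left Ioo_subset_Ioi_self]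
  have hint : IntegrableOn (fun t : ℝ => t ^ (γ - 1)) (Ioo 0 B) := by
    rw [← intervalIntegrable_iff_integrableOn_Ioo_of_le hB]
    exact intervalIntegral.intervalIntegrable_rpow' (by linarith)
  rw [← ofReal_integral_eq_lintegral_ofReal hint
      ((ae_restrict_iff' measurableSet_Ioo).mpr (ae_of_all _ fun t ht =>
        Real.rpow_nonneg ht.1.le _)),
    ← integral_Ioc_eq_integral_Ioo, ← intervalIntegral.integral_of_le hB,
    integral_rpow (Or.inl (by linarith)), sub_add_cancel,
    Real.zero_rpow hγ.ne', sub_zero]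

lemma wGamma_Ioi {γ : ℝ} (hγ : γ < 0) {A : ℝ} (hA : 0 < A) :
    wGamma γ (Ioi A) = ENNReal.ofReal (A ^ γ / -γ) := by
  rw [wGamma_apply measurableSet_Ioi, inter_eq_self_of_subset_left (Ioi_subset_Ioi hA.le),
    ← ofReal_integral_eq_lintegral_ofReal (integrableOn_Ioi_rpow_of_lt (by linarith) hA)
      ((ae_restrict_iff' measurableSet_Ioi).mpr (ae_of_all _ fun t ht =>
        Real.rpow_nonneg (hA.trans ht).le _)),
    integral_Ioi_rpow_of_lt (by linarith) hA, sub_add_cancel, neg_div, div_neg]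

lemma wGamma_rpow_lt {p γ : ℝ} (hp : 0 < p) (hγ : γ ≠ 0) {b : ℝ} (hb : 0 ≤ b) :
    wGamma γ {s | 0 < s ∧ s ^ (γ / p) < b} = ENNReal.ofReal (b ^ p / |γ|) := by
  have hexp : (b ^ (p / γ)) ^ γ = b ^ p := by
    rw [← Real.rpow_mul hb, div_mul_cancel₀ _ hγ]
  rcases hγ.lt_or_gt with hneg | hpos
  · have hz : γ / p < 0 := div_neg_of_neg_of_pos hneg hp
    rcases hb.eq_or_lt with rfl | hb
    · have : {s : ℝ | 0 < s ∧ s ^ (γ / p) < 0} = ∅ :=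
        eq_empty_of_forall_notMem fun s hs => (Real.rpow_nonneg hs.1.le _).not_gt hs.2
      rw [this, measure_empty, Real.zero_rpow hp.ne', zero_div, ENNReal.ofReal_zero]
    have hset : {s : ℝ | 0 < s ∧ s ^ (γ / p) < b} = Ioi (b ^ (p / γ)) := by
      ext s
      simp only [mem_ofPred_eq, mem_Ioi]
      constructor
      · rintro ⟨hs, hlt⟩
        rwa [← inv_div γ p, Real.rpow_inv_lt_iff_of_neg hb hs hz]
      · intro hlt
        have hs := (Real.rpow_pos_of_pos hb _).trans hlt
        rw [← inv_div γ p, Real.rpow_inv_lt_iff_of_neg hb hs hz] at hlt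
        exact ⟨hs, hlt⟩
    rw [hset, wGamma_Ioi hneg (Real.rpow_pos_of_pos hb _), hexp, abs_of_neg hneg]
  · have hz : 0 < γ / p := div_pos hpos hp
    have hset : {s : ℝ | 0 < s ∧ s ^ (γ / p) < b} = Ioo 0 (b ^ (p / γ)) := by
      ext s
      simp only [mem_ofPred_eq, mem_Ioo]
      refine and_congr_right fun hs => ?_
      rw [← inv_div γ p]
      exact (Real.lt_rpow_inv_iff_of_pos hs.le hb hz).symm
    rw [hset, wGamma_Ioo hpos (Real.rpow_nonneg hb _), hexp, abs_of_pos hpos]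

lemma wGamma_le_of_forall_rpow_lt {p γ : ℝ} (hp : 0 < p) (hγ : γ ≠ 0) {M : ℝ≥0∞}
    {S : Set ℝ} (hS : ∀ s ∈ S, 0 < s ∧ ENNReal.ofReal (s ^ (γ / p)) < M) :
    wGamma γ S ≤ ENNReal.ofReal (1 / |γ|) * M ^ p := by
  rcases eq_or_ne M ∞ with rfl | hM
  · rw [ENNReal.top_rpow_of_pos hp, ENNReal.mul_top (by simpa using hγ)]
    exact le_top
  calc wGamma γ S ≤ wGamma γ {s | 0 < s ∧ s ^ (γ / p) < M.toReal} :=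
        measure_mono fun s hs => ⟨(hS s hs).1, (ENNReal.ofReal_lt_iff_lt_toReal
          (Real.rpow_nonneg (hS s hs).1.le _) hM).1 (hS s hs).2⟩
    _ = ENNReal.ofReal (1 / |γ|) * M ^ p := by
        rw [wGamma_rpow_lt hp hγ ENNReal.toReal_nonneg, ← one_div_mul_eq_div,
          ENNReal.ofReal_mul (by positivity), ← ENNReal.ofReal_rpow_of_nonneg
            ENNReal.toReal_nonneg hp.le, ENNReal.ofReal_toReal hM]

lemma wGamma_preimage_mul_left {γ c : ℝ} (hc : 0 < c) {S : Set ℝ} (hS : MeasurableSet S) :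
    wGamma γ ((c * ·) ⁻¹' S) = ENNReal.ofReal (c ^ (-γ)) * wGamma γ S := by
  have hmul : Measurable (c * · : ℝ → ℝ) := measurable_const_mul c
  have hpre : (c * ·) ⁻¹' S ∩ Ioi 0 = (c * ·) ⁻¹' (S ∩ Ioi 0) := by
    ext s
    simp [mul_pos_iff_of_pos_left hc]
  have hE : MeasurableSet (S ∩ Ioi 0) := hS.inter measurableSet_Ioi
  have hw : Measurable fun t : ℝ => ENNReal.ofReal (t ^ (γ - 1)) := by fun_prop
  calc wGamma γ ((c * ·) ⁻¹' S)
      = ∫⁻ s in (c * ·) ⁻¹' (S ∩ Ioi 0), ENNReal.ofReal (c ^ (-γ) * c) *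
          ENNReal.ofReal ((c * s) ^ (γ - 1)) := by
        rw [wGamma_apply (hS.preimage hmul), hpre]
        refine setLIntegral_congr_fun (hE.preimage hmul) fun s hs => ?_
        have hs : 0 < s := (mul_pos_iff_of_pos_left hc).1 hs.2
        have hc1 : c ^ (-γ) * c * c ^ (γ - 1) = 1 := by
          rw [← Real.rpow_add_one hc.ne', ← Real.rpow_add hc]
          norm_num
        rw [← ENNReal.ofReal_mul (by positivity), Real.mul_rpow hc.le hs.le]
        congr 1
        linear_combination (-(s ^ (γ - 1))) * hc1
    _ = ENNReal.ofReal (c ^ (-γ)) * wGamma γ S := by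
        rw [lintegral_const_mul' _ _ ENNReal.ofReal_ne_top, ← setLIntegral_map hE hw hmul,
          Real.map_volume_mul_left hc.ne', Measure.restrict_smul, lintegral_smul_measure,
          wGamma_apply hS, smul_eq_mul, ← mul_assoc, ← ENNReal.ofReal_mul (by positivity),
          abs_of_pos (inv_pos.2 hc), mul_assoc, mul_inv_cancel₀ hc.ne', mul_one]

lemma ofReal_rpow_mul_wGamma_superlevel {p γ l : ℝ} (hp : p ≠ 0) (hγ : γ ≠ 0) (hl : 0 < l)
    {F : ℝ → ℝ} (hF : Measurable F) :
    ENNReal.ofReal (l ^ p) * wGamma γ {t | 0 < t ∧ l * t ^ (γ / p) < F t} =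
      wGamma γ {s | 0 < s ∧ s ^ (γ / p) < F (l ^ (-(p / γ)) * s)} := by
  set c := l ^ (-(p / γ))
  have hc : 0 < c := Real.rpow_pos_of_pos hl _
  have hcr : c ^ (γ / p) = l⁻¹ := by
    rw [← Real.rpow_mul hl.le, show -(p / γ) * (γ / p) = -1 by field_simp, Real.rpow_neg_one]
  have hcγ : c ^ (-γ) = l ^ p := by
    rw [← Real.rpow_mul hl.le, show -(p / γ) * -γ = p by field_simp]
  have hpre : {s | 0 < s ∧ s ^ (γ / p) < F (c * s)} =
      (c * ·) ⁻¹' {t | 0 < t ∧ l * t ^ (γ / p) < F t} := by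
    ext s
    simp only [mem_preimage, mem_ofPred_eq, mul_pos_iff_of_pos_left hc]
    refine and_congr_right fun hs => ?_
    rw [Real.mul_rpow hc.le hs.le, hcr, mul_inv_cancel_left₀ hl.ne']
  have hE : MeasurableSet {t | 0 < t ∧ l * t ^ (γ / p) < F t} :=
    measurableSet_Ioi.inter (measurableSet_lt (by fun_prop) hF)
  rw [hpre, wGamma_preimage_mul_left hc hE, hcγ]

lemma ofReal_rpow_mul_prod_superlevel {X : Type*} [MeasurableSpace X] (m : Measure X)
    {p γ l : ℝ} (hp : p ≠ 0) (hγ : γ ≠ 0) (hl : 0 < l) {T : ℝ → X → ℝ}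
    (hT : Measurable fun q : X × ℝ => T q.2 q.1) :
    ENNReal.ofReal (l ^ p) *
        m.prod (wGamma γ) {q : X × ℝ | 0 < q.2 ∧ l * q.2 ^ (γ / p) < |T q.2 q.1|} =
      ∫⁻ x, wGamma γ {s | 0 < s ∧ s ^ (γ / p) < |T (l ^ (-(p / γ)) * s) x|} ∂m := by
  have hE : MeasurableSet {q : X × ℝ | 0 < q.2 ∧ l * q.2 ^ (γ / p) < |T q.2 q.1|} :=
    measurable_snd measurableSet_Ioi |>.inter (measurableSet_lt (by fun_prop) hT.abs)
  rw [Measure.prod_apply hE, ← lintegral_const_mul' _ _ ENNReal.ofReal_ne_top]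
  exact lintegral_congr fun x =>
    ofReal_rpow_mul_wGamma_superlevel hp hγ hl (hT.comp measurable_prodMk_left).abs

lemma tendsto_measure_rpow_lt_comp {μ : Measure ℝ} [NullSingletonClass μ] {r b : ℝ}
    (hr : r ≠ 0) {F : ℝ → ℝ} (hF : Measurable F) (hFb : Tendsto F (𝓝[>] 0) (𝓝 b))
    {c : ℕ → ℝ} (hc : Tendsto c atTop (𝓝[>] 0))
    (hfin : μ (⋃ n, {s | 0 < s ∧ s ^ r < F (c n * s)}) ≠ ∞) :
    Tendsto (fun n => μ {s | 0 < s ∧ s ^ r < F (c n * s)}) atTop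
      (𝓝 (μ {s | 0 < s ∧ s ^ r < b})) := by
  have hmeas : ∀ n, MeasurableSet {s | 0 < s ∧ s ^ r < F (c n * s)} := fun n =>
    measurableSet_Ioi.inter
      (measurableSet_lt (measurable_id.pow_const r) (hF.comp (measurable_const_mul (c n))))
  have hlevel : μ {s | 0 < s ∧ s ^ r = b} = 0 :=
    Set.Subsingleton.measure_zero (fun s hs t ht =>
      Real.rpow_left_injOn hr hs.1.le ht.1.le (hs.2.trans ht.2.symm)) μ
  refine tendsto_measure_of_ae_tendsto_indicator atTop
    (measurableSet_Ioi.inter (measurableSet_lt (measurable_id.pow_const r) measurable_const)) hmeas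
    (MeasurableSet.iUnion hmeas) hfin (Eventually.of_forall (subset_iUnion _)) ?_
  filter_upwards [measure_eq_zero_iff_ae_notMem.1 hlevel] with s hs
  rcases le_or_gt s 0 with hs0 | hs0
  · exact Eventually.of_forall fun n =>
      iff_of_false (fun h => hs0.not_gt h.1) (fun h => hs0.not_gt h.1)
  have hcs : Tendsto (fun n => c n * s) atTop (𝓝[>] 0) := by
    obtain ⟨hc0, hcpos⟩ := tendsto_nhdsWithin_iff.1 hc
    exact tendsto_nhdsWithin_iff.2
      ⟨by simpa using hc0.mul_const s, hcpos.mono fun n hn => mul_pos hn hs0⟩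
  have hFs : Tendsto (fun n => F (c n * s)) atTop (𝓝 b) := hFb.comp hcs
  rcases lt_or_gt_of_ne fun h => hs ⟨hs0, h⟩ with hlt | hgt
  · filter_upwards [hFs.eventually_const_lt hlt] with n hn
    exact iff_of_true ⟨hs0, hn⟩ ⟨hs0, hlt⟩
  · filter_upwards [hFs.eventually_lt_const hgt] with n hn
    exact iff_of_false (fun h => hn.not_gt h.2) (fun h => hgt.not_gt h.2)

lemma ofReal_abs_le_TstarFn {X : Type*} (T : ℝ → X → ℝ) {t : ℝ} (ht : 0 < t) (x : X) :
    ENNReal.ofReal |T t x| ≤ TstarFn T x :=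
  le_iSup₂ (f := fun t (_ : 0 < t) => ENNReal.ofReal |T t x|) t ht

section Convergence

variable {X : Type*} [MeasurableSpace X] {m : Measure X} {p γ : ℝ} {T : ℝ → X → ℝ} {g : X → ℝ}

lemma tendsto_lintegral_wGamma_superlevel_of_seq (hp : 0 < p) (hγ : γ ≠ 0)
    (hT : Measurable fun q : X × ℝ => T q.2 q.1)
    (hlim : ∀ᵐ x ∂m, Tendsto (T · x) (𝓝[>] 0) (𝓝 (g x)))
    (hmax : ∫⁻ x, TstarFn T x ^ p ∂m ≠ ∞) {c : ℕ → ℝ} (hc0 : ∀ n, 0 < c n)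
    (hc : Tendsto c atTop (𝓝[>] 0)) :
    Tendsto (fun n => ∫⁻ x, wGamma γ {s | 0 < s ∧ s ^ (γ / p) < |T (c n * s) x|} ∂m) atTop
      (𝓝 (∫⁻ x, wGamma γ {s | 0 < s ∧ s ^ (γ / p) < |g x|} ∂m)) := by
  set A : ℕ → Set (X × ℝ) := fun n => {q | 0 < q.2 ∧ q.2 ^ (γ / p) < |T (c n * q.2) q.1|}
  have hA : ∀ n, MeasurableSet (A n) := fun n =>
    measurable_snd measurableSet_Ioi |>.inter (measurableSet_lt (by fun_prop)
      (hT.comp (measurable_fst.prodMk (measurable_snd.const_mul (c n)))).abs)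
  -- `TstarFn T` need not be measurable; the union over the sequence gives a measurable majorant.
  have hB : Measurable fun x => wGamma γ (Prod.mk x ⁻¹' ⋃ n, A n) :=
    measurable_measure_prodMk_left (MeasurableSet.iUnion hA)
  have hbound : ∀ x, wGamma γ (Prod.mk x ⁻¹' ⋃ n, A n) ≤
      ENNReal.ofReal (1 / |γ|) * TstarFn T x ^ p := fun x =>
    wGamma_le_of_forall_rpow_lt hp hγ fun s hs => by
      obtain ⟨n, hs0, hs⟩ := mem_iUnion.1 hs
      exact ⟨hs0, ((ENNReal.ofReal_lt_ofReal_iff_of_nonneg (by positivity)).2 hs).trans_le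
        (ofReal_abs_le_TstarFn T (mul_pos (hc0 n) hs0) x)⟩
  have hfin : ∫⁻ x, wGamma γ (Prod.mk x ⁻¹' ⋃ n, A n) ∂m ≠ ∞ :=
    ne_top_of_le_ne_top
      (by rw [lintegral_const_mul' _ _ ENNReal.ofReal_ne_top]
          exact ENNReal.mul_ne_top ENNReal.ofReal_ne_top hmax)
      (lintegral_mono hbound)
  refine tendsto_lintegral_of_dominated_convergence _
    (fun n => measurable_measure_prodMk_left (hA n))
    (fun n => ae_of_all _ fun x => measure_mono (preimage_mono (f := Prod.mk x) (subset_iUnion A n)))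
    hfin ?_
  filter_upwards [hlim, ae_lt_top hB hfin] with x hx hxfin
  rw [preimage_iUnion] at hxfin
  exact tendsto_measure_rpow_lt_comp (div_ne_zero hγ hp.ne')
    (hT.comp measurable_prodMk_left).abs hx.abs hc hxfin.ne

lemma tendsto_lintegral_wGamma_superlevel (hp : 0 < p) (hγ : γ ≠ 0)
    (hT : Measurable fun q : X × ℝ => T q.2 q.1)
    (hlim : ∀ᵐ x ∂m, Tendsto (T · x) (𝓝[>] 0) (𝓝 (g x)))
    (hmax : ∫⁻ x, TstarFn T x ^ p ∂m ≠ ∞) :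
    Tendsto (fun c => ∫⁻ x, wGamma γ {s | 0 < s ∧ s ^ (γ / p) < |T (c * s) x|} ∂m) (𝓝[>] 0)
      (𝓝 (ENNReal.ofReal (1 / |γ|) * ∫⁻ x, ENNReal.ofReal (|g x| ^ p) ∂m)) := by
  have hlimit : ∫⁻ x, wGamma γ {s | 0 < s ∧ s ^ (γ / p) < |g x|} ∂m =
      ENNReal.ofReal (1 / |γ|) * ∫⁻ x, ENNReal.ofReal (|g x| ^ p) ∂m := by
    rw [← lintegral_const_mul' _ _ ENNReal.ofReal_ne_top]
    refine lintegral_congr fun x => ?_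
    rw [wGamma_rpow_lt hp hγ (abs_nonneg _), ← ENNReal.ofReal_mul (by positivity),
      one_div_mul_eq_div]
  rw [← hlimit, tendsto_iff_seq_tendsto]
  intro c hc
  obtain ⟨N, hN⟩ := eventually_atTop.1 (hc.eventually self_mem_nhdsWithin)
  rw [← tendsto_add_atTop_iff_nat N]
  exact tendsto_lintegral_wGamma_superlevel_of_seq hp hγ hT hlim hmax
    (fun n => hN _ (Nat.le_add_left N n)) (hc.comp (tendsto_add_atTop_nat N))

end Convergence

lemma tendsto_rpow_neg_div_nhdsGT_zero {p γ : ℝ} (hp : 0 < p) (hγ : γ ≠ 0) :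
    Tendsto (fun l : ℝ => l ^ (-(p / γ))) (if 0 < γ then atTop else 𝓝[>] 0) (𝓝[>] 0) := by
  split_ifs with hγpos
  · exact tendsto_nhdsWithin_iff.2 ⟨tendsto_rpow_neg_atTop (div_pos hp hγpos),
      (eventually_gt_atTop 0).mono fun l hl => Real.rpow_pos_of_pos hl _⟩
  · have he : 0 < -(p / γ) :=
      neg_pos.2 (div_neg_of_pos_of_neg hp (lt_of_le_of_ne (not_lt.1 hγpos) hγ))
    refine tendsto_nhdsWithin_iff.2 ⟨?_,
      eventually_mem_nhdsWithin.mono fun l hl => Real.rpow_pos_of_pos hl _⟩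
    simpa [Real.zero_rpow he.ne'] using
      ((Real.continuousAt_rpow_const 0 _ (Or.inr he.le)).tendsto).mono_left nhdsWithin_le_nhds

theorem abstract_exact_limit_signed_gamma_general
    {X : Type*} [MeasurableSpace X] (m : Measure X)
    (p γ : ℝ) (hp : 1 ≤ p) (hγ : γ ≠ 0)
    (T : ℝ → X → ℝ) (hT : Measurable fun q : X × ℝ => T q.2 q.1)
    (g : X → ℝ)
    (hlim : ∀ᵐ x ∂m, Tendsto (fun t => T t x) (nhdsWithin 0 (Set.Ioi 0)) (nhds (g x)))
    (hmax : ∫⁻ x, (TstarFn T x) ^ p ∂m ≠ ∞) :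
    Tendsto (fun l : ℝ => ENNReal.ofReal (l ^ p) *
        (m.prod (wGamma γ)) {q : X × ℝ | 0 < q.2 ∧ l * q.2 ^ (γ / p) < |T q.2 q.1|})
      (if 0 < γ then atTop else nhdsWithin 0 (Set.Ioi 0))
      (nhds (ENNReal.ofReal (1 / |γ|) * ∫⁻ x, ENNReal.ofReal (|g x| ^ p) ∂m)) := by
  have hp0 : 0 < p := one_pos.trans_le hp
  have hpos : ∀ᶠ l in (if 0 < γ then atTop else 𝓝[>] 0 : Filter ℝ), 0 < l := by
    split_ifs
    exacts [eventually_gt_atTop 0, self_mem_nhdsWithin]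
  refine ((tendsto_lintegral_wGamma_superlevel hp0 hγ hT hlim hmax).comp
    (tendsto_rpow_neg_div_nhdsGT_zero hp0 hγ)).congr' ?_
  filter_upwards [hpos] with l hl
  exact (ofReal_rpow_mul_prod_superlevel m hp0.ne' hγ hl hT).symm

/-- Theorem (abstract exact limit formula with signed weight exponent): if
`g = lim_{t→0+} T_t f` exists a.e. and `T* f ∈ L^p`, then
`lim_{λ→L} λ^p ∬_{t^{−γ/p}|T_t f(x)|>λ} t^{γ−1} dt dm = (1/|γ|) ‖g‖_p^p`,
where `L = ∞` if `γ > 0` and `L = 0` if `γ < 0`. -/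
theorem abstract_exact_limit_signed_gamma
    {X : Type*} [MeasurableSpace X] (m : Measure X) [SigmaFinite m]
    (p γ : ℝ) (hp : 1 ≤ p) (hγ : γ ≠ 0)
    (T : ℝ → X → ℝ) (hT : Measurable fun q : X × ℝ => T q.2 q.1)
    (g : X → ℝ)
    (hlim : ∀ᵐ x ∂m, Tendsto (fun t => T t x) (nhdsWithin 0 (Set.Ioi 0)) (nhds (g x)))
    (hmax : ∫⁻ x, (TstarFn T x) ^ p ∂m ≠ ∞) :
    Tendsto (fun l : ℝ => ENNReal.ofReal (l ^ p) *
        (m.prod (wGamma γ)) {q : X × ℝ | 0 < q.2 ∧ l * q.2 ^ (γ / p) < |T q.2 q.1|})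
      (if 0 < γ then atTop else nhdsWithin 0 (Set.Ioi 0))
      (nhds (ENNReal.ofReal (1 / |γ|) * ∫⁻ x, ENNReal.ofReal (|g x| ^ p) ∂m)) :=
  abstract_exact_limit_signed_gamma_general m p γ hp hγ T hT g hlim hmax
end
end
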